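/- Let q ≥ 2 be an integer and ρ ∈ (0,1). Every feasible vector α* that maximizes Σ_{j=1}^q α_j·log₂ j over all feasible vectors satisfies: there exists an index i ∈ {1,…,q−1} such that α*_j = 0 for all j ∉ {i, i+1}. -/

import Mathlib

/-- A vector `α = (α 1, …, α q)` (indexed `1,…,q`) is feasible for `q` and `ρ` if all
entries are nonnegative, they sum to `1`, and `Σ_{i=1}^q i·α_i = 2/ρ − 1`. -/
def Feasible (q : ℕ) (ρ : ℝ) (α : ℕ → ℝ) : Prop :=
  (∀ i ∈ Finset.Icc 1 q, 0 ≤ α i) ∧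
  (∑ i ∈ Finset.Icc 1 q, α i = 1) ∧
  (∑ i ∈ Finset.Icc 1 q, (i : ℝ) * α i = 2 / ρ - 1)

/-- The objective `Σ_{i=1}^q α_i · log₂ i`. -/
noncomputable def objective (q : ℕ) (α : ℕ → ℝ) : ℝ :=
  ∑ i ∈ Finset.Icc 1 q, α i * Real.logb 2 i

lemma sum_helper (s : Finset ℕ) (a b c : ℕ) (ha : a ∈ s) (hb : b ∈ s) (hc : c ∈ s)
    (α : ℕ → ℝ) (ε δ : ℝ) (w : ℕ → ℝ) :
    ∑ j ∈ s, (α j + (if j = c then ε + δ else 0) - (if j = a then ε else 0)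
      - (if j = b then δ else 0)) * w j
      = (∑ j ∈ s, α j * w j) + (ε + δ) * w c - ε * w a - δ * w b := by
  simp only [add_mul, sub_mul, ite_mul, zero_mul,
    Finset.sum_sub_distrib, Finset.sum_add_distrib, Finset.sum_ite_eq', ha, hb, hc, if_true]

lemma exchange (q : ℕ) (ρ : ℝ) (α : ℕ → ℝ) (hα : Feasible q ρ α)
    (a b : ℕ) (ha : a ∈ Finset.Icc 1 q) (hb : b ∈ Finset.Icc 1 q) (hab : a + 1 < b)
    (hpa : 0 < α a) (hpb : 0 < α b) :
    ∃ β, Feasible q ρ β ∧ objective q α < objective q β := by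
  obtain ⟨hnn, hs1, hs2⟩ := hα
  set c := a + 1 with hcdef
  simp only [Finset.mem_Icc] at ha hb
  have hc : c ∈ Finset.Icc 1 q := Finset.mem_Icc.2 ⟨le_trans ha.1 (Nat.le_succ a),
    le_trans (Nat.le_of_lt hab) hb.2⟩
  have hamem : a ∈ Finset.Icc 1 q := Finset.mem_Icc.2 ha
  have hbmem : b ∈ Finset.Icc 1 q := Finset.mem_Icc.2 hb
  have hbc : (c : ℝ) < (b : ℝ) := by exact_mod_cast hab
  have hbcpos : (0:ℝ) < (b : ℝ) - c := by linarith
  set δ : ℝ := min (α a / ((b:ℝ) - c)) (α b) with hδdef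
  have hδpos : 0 < δ := lt_min (div_pos hpa hbcpos) hpb
  set ε : ℝ := δ * ((b:ℝ) - c) with hεdef
  have hεpos : 0 < ε := mul_pos hδpos hbcpos
  have hεle : ε ≤ α a := by
    have h := min_le_left (α a / ((b:ℝ) - c)) (α b)
    calc ε ≤ (α a / ((b:ℝ) - c)) * ((b:ℝ) - c) := by
          rw [hεdef]; exact mul_le_mul_of_nonneg_right h hbcpos.le
      _ = α a := div_mul_cancel₀ _ hbcpos.ne'
  have hδle : δ ≤ α b := min_le_right _ _
  set β : ℕ → ℝ := fun j => α j + (if j = c then ε + δ else 0) - (if j = a then ε else 0)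
      - (if j = b then δ else 0) with hβdef
  have hac : a ≠ c := by omega
  have hbne : b ≠ c := by omega
  have hban : b ≠ a := by omega
  have hcR : (c : ℝ) = (a : ℝ) + 1 := by rw [hcdef]; push_cast; ring
  have hkey : (ε + δ) * (c:ℝ) - ε * (a:ℝ) - δ * (b:ℝ) = 0 := by
    rw [hεdef, hcR]; push_cast; ring
  have hsum1 : ∑ j ∈ Finset.Icc 1 q, β j
      = (∑ j ∈ Finset.Icc 1 q, α j) + (ε + δ) - ε - δ := by
    have := sum_helper (Finset.Icc 1 q) a b c hamem hbmem hc α ε δ (fun _ => 1)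
    simp only [mul_one] at this
    rw [hβdef]; exact this
  have hsum2 : ∑ j ∈ Finset.Icc 1 q, (j:ℝ) * β j
      = (∑ j ∈ Finset.Icc 1 q, (j:ℝ) * α j) + ((ε + δ) * c - ε * a - δ * b) := by
    have := sum_helper (Finset.Icc 1 q) a b c hamem hbmem hc α ε δ (fun j => (j:ℝ))
    rw [hβdef, show (∑ j ∈ Finset.Icc 1 q, (j:ℝ) * ((fun j => α j + (if j = c then ε + δ else 0)
      - (if j = a then ε else 0) - (if j = b then δ else 0)) j))
      = ∑ j ∈ Finset.Icc 1 q, (α j + (if j = c then ε + δ else 0)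
      - (if j = a then ε else 0) - (if j = b then δ else 0)) * (j:ℝ) from
        Finset.sum_congr rfl fun j _ => mul_comm _ _, this,
      show (∑ j ∈ Finset.Icc 1 q, α j * (j:ℝ)) = ∑ j ∈ Finset.Icc 1 q, (j:ℝ) * α j from
        Finset.sum_congr rfl fun j _ => mul_comm _ _]
    ring
  have hsum3 : objective q β = objective q α + ((ε + δ) * Real.logb 2 c
      - ε * Real.logb 2 a - δ * Real.logb 2 b) := by
    have := sum_helper (Finset.Icc 1 q) a b c hamem hbmem hc α ε δ (fun j => Real.logb 2 j)
    unfold objective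
    rw [hβdef, this]; ring
  refine ⟨β, ⟨?_, ?_, ?_⟩, ?_⟩
  · intro i hi
    rcases eq_or_ne i a with h1 | h1
    · subst h1; simp only [hβdef, if_pos rfl, if_neg hac, if_neg hban.symm, if_true]; linarith
    · rcases eq_or_ne i b with h2 | h2
      · subst h2; simp only [hβdef, if_pos rfl, if_neg hbne, if_neg hban, if_true]; linarith
      · rcases eq_or_ne i c with h3 | h3
        · subst h3
          have := hnn c hc
          simp only [hβdef, if_pos rfl, if_neg (Ne.symm hac), if_neg (Ne.symm hbne), if_true]
          linarith
        · simp only [hβdef, if_neg h1, if_neg h2, if_neg h3]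
          simpa using hnn i hi
  · rw [hsum1, hs1]; ring
  · rw [hsum2, hs2, hkey]; ring
  · rw [hsum3]
    have haR : (0:ℝ) < (a:ℝ) := by exact_mod_cast ha.1
    have hcRpos : (0:ℝ) < (c:ℝ) := by rw [hcR]; linarith
    have hbR : (0:ℝ) < (b:ℝ) := by linarith
    have hεδ : 0 < ε + δ := by linarith
    have habne : (a:ℝ) ≠ (b:ℝ) := by exact_mod_cast (show a ≠ b by omega)
    have hconc := strictConcaveOn_log_Ioi.2 (Set.mem_Ioi.2 haR) (Set.mem_Ioi.2 hbR)
      habne (div_pos hεpos hεδ) (div_pos hδpos hεδ) (by field_simp)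
    have hmean : (ε / (ε + δ)) • (a:ℝ) + (δ / (ε + δ)) • (b:ℝ) = (c:ℝ) := by
      simp only [smul_eq_mul]
      field_simp
      linarith [hkey]
    rw [hmean] at hconc
    simp only [smul_eq_mul] at hconc
    have hlog : ε * Real.log a + δ * Real.log b < (ε + δ) * Real.log c := by
      have h := mul_lt_mul_of_pos_left hconc hεδ
      have h2 : (ε + δ) * (ε / (ε + δ) * Real.log a + δ / (ε + δ) * Real.log b)
          = ε * Real.log a + δ * Real.log b := by field_simp
      linarith [h, h2]
    have hlog2 : (0:ℝ) < Real.log 2 := Real.log_pos (by norm_num)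
    have hfin : ε * Real.logb 2 a + δ * Real.logb 2 b < (ε + δ) * Real.logb 2 c := by
      simp only [Real.logb, ← mul_div_assoc, ← add_div]
      gcongr
    linarith

theorem stmt11 (q : ℕ) (hq : 2 ≤ q) (ρ : ℝ) (hρ : ρ ∈ Set.Ioo (0 : ℝ) 1)
    (α : ℕ → ℝ) (hα : Feasible q ρ α)
    (hmax : ∀ β : ℕ → ℝ, Feasible q ρ β → objective q β ≤ objective q α) :
    ∃ i : ℕ, 1 ≤ i ∧ i ≤ q - 1 ∧
      ∀ j ∈ Finset.Icc 1 q, j ≠ i → j ≠ i + 1 → α j = 0 := by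
  classical
  set S := (Finset.Icc 1 q).filter (fun j => α j ≠ 0) with hS
  have hSne : S.Nonempty := by
    by_contra h
    rw [Finset.not_nonempty_iff_eq_empty] at h
    have hz : ∑ i ∈ Finset.Icc 1 q, α i = 0 := Finset.sum_eq_zero (fun i hi => by
      by_contra hne
      have : i ∈ S := Finset.mem_filter.2 ⟨hi, hne⟩
      simp [h] at this)
    rw [hα.2.1] at hz; norm_num at hz
  set a := S.min' hSne with hadef
  set b := S.max' hSne with hbdef
  have haS : a ∈ S := S.min'_mem hSne
  have hbS : b ∈ S := S.max'_mem hSne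
  have haI : a ∈ Finset.Icc 1 q := (Finset.mem_filter.1 haS).1
  have hbI : b ∈ Finset.Icc 1 q := (Finset.mem_filter.1 hbS).1
  have hpa : 0 < α a := lt_of_le_of_ne (hα.1 a haI) (Ne.symm (Finset.mem_filter.1 haS).2)
  have hpb : 0 < α b := lt_of_le_of_ne (hα.1 b hbI) (Ne.symm (Finset.mem_filter.1 hbS).2)
  have hba : b ≤ a + 1 := by
    by_contra h
    push_neg at h
    obtain ⟨β, hβ, hlt⟩ := exchange q ρ α hα a b haI hbI h hpa hpb
    exact absurd (hmax β hβ) (not_le.2 hlt)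
  have ha1 : 1 ≤ a := (Finset.mem_Icc.1 haI).1
  have haq : a ≤ q := (Finset.mem_Icc.1 haI).2
  by_cases hcase : a ≤ q - 1
  · refine ⟨a, ha1, hcase, fun j hj hja hja1 => ?_⟩
    by_contra hne
    have hjS : j ∈ S := Finset.mem_filter.2 ⟨hj, hne⟩
    have h1 := S.min'_le j hjS
    have h2 := S.le_max' j hjS
    omega
  · have haq' : a = q := by omega
    refine ⟨q - 1, by omega, le_refl _, fun j hj hj1 hj2 => ?_⟩
    by_contra hne
    have hjS : j ∈ S := Finset.mem_filter.2 ⟨hj, hne⟩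
    have h1 := S.min'_le j hjS
    have h2 := (Finset.mem_Icc.1 hj).2
    omega
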